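/- arXiv:2208.03860 — 2 statements merged into one kernel-verified Lean document; each statement's English description precedes it below -/
import Mathlib

section
/- The support of the Slater spectrum is the interval [Ŝ, T - Ŝ]: a_{Ŝ} ≥ 1, a_{T-Ŝ} ≥ 1, and for every t with 0 ≤ t ≤ T, if t < Ŝ or t > T - Ŝ then a_t = 0. -/
/-- The inconsistency index `S(ρ) = ∑_{i<j} w (ρ j) (ρ i)`. -/
def inconsistency {M : ℕ} (w : Fin M → Fin M → ℕ) (ρ : Equiv.Perm (Fin M)) : ℕ :=
  ∑ i : Fin M, ∑ j ∈ Finset.Ioi i, w (ρ j) (ρ i)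

/-- The total number of comparisons `T = ∑_{m,n} w m n`. -/
def totalComparisons {M : ℕ} (w : Fin M → Fin M → ℕ) : ℕ :=
  ∑ m : Fin M, ∑ n : Fin M, w m n

/-- The Slater spectrum `a_t = card {ρ : S(ρ) = t}`. -/
def slaterSpectrum {M : ℕ} (w : Fin M → Fin M → ℕ) (t : ℕ) : ℕ :=
  (Finset.univ.filter fun ρ : Equiv.Perm (Fin M) => inconsistency w ρ = t).card

/-! Reversing an order `ρ` turns every pair it ranks consistently into an inconsistent one and
vice versa, so `S(ρ) + S(ρ ∘ rev) = T` once the diagonal of `w` vanishes. Hence `S ≤ T - Ŝ`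
everywhere, with equality at the reversal of a minimiser: every value of `S` lies in
`[Ŝ, T - Ŝ]`, and both endpoints are attained. -/

section

variable {M : ℕ} (w : Fin M → Fin M → ℕ)

lemma inconsistency_eq_sum_ite (ρ : Equiv.Perm (Fin M)) :
    inconsistency w ρ = ∑ i, ∑ j, if i < j then w (ρ j) (ρ i) else 0 := by
  simp only [inconsistency, ← Finset.filter_lt_eq_Ioi, Finset.sum_filter]

lemma inconsistency_mul_revPerm (ρ : Equiv.Perm (Fin M)) :
    inconsistency w (ρ * Fin.revPerm) = ∑ i, ∑ j, if j < i then w (ρ j) (ρ i) else 0 := by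
  rw [inconsistency_eq_sum_ite]
  refine Fintype.sum_equiv Fin.revPerm _ _ fun i => Fintype.sum_equiv Fin.revPerm _ _ fun j => ?_
  simp only [Equiv.Perm.mul_apply, Fin.revPerm_apply, Fin.rev_lt_rev]

lemma totalComparisons_eq_sum_perm (ρ : Equiv.Perm (Fin M)) :
    totalComparisons w = ∑ i, ∑ j, w (ρ j) (ρ i) := by
  rw [totalComparisons, Finset.sum_comm, ← Equiv.sum_comp ρ]
  exact Finset.sum_congr rfl fun i _ => (Equiv.sum_comp ρ fun m => w m (ρ i)).symm

theorem inconsistency_add_inconsistency_mul_revPerm (ρ : Equiv.Perm (Fin M)) :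
    inconsistency w ρ + inconsistency w (ρ * Fin.revPerm) + ∑ m, w m m = totalComparisons w := by
  have hdiag : ∑ m, w m m = ∑ i, ∑ j, if i = j then w (ρ j) (ρ i) else 0 := by
    simp only [Finset.sum_ite_eq, Finset.mem_univ, if_true]
    exact (Equiv.sum_comp ρ fun m => w m m).symm
  rw [inconsistency_eq_sum_ite, inconsistency_mul_revPerm, hdiag, totalComparisons_eq_sum_perm w ρ,
    ← Finset.sum_add_distrib, ← Finset.sum_add_distrib]
  refine Finset.sum_congr rfl fun i _ => ?_
  rw [← Finset.sum_add_distrib, ← Finset.sum_add_distrib]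
  refine Finset.sum_congr rfl fun j _ => ?_
  rcases lt_trichotomy i j with h | rfl | h
  · simp [h, h.ne, h.not_gt]
  · simp
  · simp [h, h.ne', h.not_gt]

lemma one_le_slaterSpectrum_iff (t : ℕ) :
    1 ≤ slaterSpectrum w t ↔ ∃ ρ, inconsistency w ρ = t := by
  simp [slaterSpectrum, Nat.one_le_iff_ne_zero]

lemma slaterSpectrum_eq_zero_iff (t : ℕ) :
    slaterSpectrum w t = 0 ↔ ∀ ρ, inconsistency w ρ ≠ t := by
  simp [slaterSpectrum, Finset.filter_eq_empty_iff]

end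

/-- The support of the Slater spectrum is the interval `[Ŝ, T - Ŝ]`, where `Ŝ` is the
Slater index (the minimum of `S` over all permutations): `a_Ŝ ≥ 1`, `a_{T-Ŝ} ≥ 1`,
and for every `t ≤ T`, if `t < Ŝ` or `t > T - Ŝ` then `a_t = 0`. -/
theorem slaterSpectrum_support
    (M : ℕ) (w : Fin M → Fin M → ℕ) (hw : ∀ m, w m m = 0)
    (Shat : ℕ) (hShat : IsLeast (Set.range (inconsistency w)) Shat) :
    1 ≤ slaterSpectrum w Shat ∧
      1 ≤ slaterSpectrum w (totalComparisons w - Shat) ∧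
      ∀ t ≤ totalComparisons w,
        (t < Shat ∨ totalComparisons w - Shat < t) → slaterSpectrum w t = 0 := by
  obtain ⟨⟨ρ₀, hρ₀⟩, hlb⟩ := hShat
  have hmin (ρ : Equiv.Perm (Fin M)) : Shat ≤ inconsistency w ρ := hlb ⟨ρ, rfl⟩
  have hsum (ρ : Equiv.Perm (Fin M)) :
      inconsistency w ρ + inconsistency w (ρ * Fin.revPerm) = totalComparisons w := by
    simpa [hw] using inconsistency_add_inconsistency_mul_revPerm w ρ
  have hmax (ρ : Equiv.Perm (Fin M)) : inconsistency w ρ ≤ totalComparisons w - Shat := by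
    have := hsum ρ; have := hmin (ρ * Fin.revPerm); omega
  refine ⟨(one_le_slaterSpectrum_iff w _).2 ⟨ρ₀, hρ₀⟩,
    (one_le_slaterSpectrum_iff w _).2 ⟨ρ₀ * Fin.revPerm, by have := hsum ρ₀; omega⟩,
    fun t _ ht => (slaterSpectrum_eq_zero_iff w t).2 fun ρ hρ => ?_⟩
  have := hmin ρ; have := hmax ρ; omega
end

section
/- Recursion for the maximal consistency index (the degree of the spectrum polynomial): let s be a nonempty finite subset of Fin M, let Ord(s) denote the set of duplicate-free lists whose set of elements equals s, and define q(s) = max_{l ∈ Ord(s)} C(l). Then q(s) = max_{e ∈ s} ( d_e(s) + q(s \ {e}) ), where d_e(s) = ∑_{n ∈ s \ {e}} w e n and q(∅) = 0. -/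
/-- The consistency index of a list `l = [l_0, …, l_{k-1}]`:
`C(l) = ∑_{0 ≤ i < j < k} w (l_i) (l_j)`. -/
def listConsistency {M : ℕ} (w : Fin M → Fin M → ℕ) (l : List (Fin M)) : ℕ :=
  ∑ i : Fin l.length, ∑ j : Fin l.length,
    if (i : ℕ) < (j : ℕ) then w (l.get i) (l.get j) else 0

/-- `OrdSet s`: the set of duplicate-free lists of elements of `Fin M` whose set of
elements equals the finset `s`. -/
def OrdSet {M : ℕ} (s : Finset (Fin M)) : Set (List (Fin M)) :=
  {l : List (Fin M) | l.Nodup ∧ l.toFinset = s}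

/-- `q s`: the maximal consistency index over all orders of the elements of `s`
(for `s = ∅` this is `0`, since `OrdSet ∅ = {[]}`). -/
noncomputable def maxConsistency {M : ℕ} (w : Fin M → Fin M → ℕ)
    (s : Finset (Fin M)) : ℕ :=
  sSup (listConsistency w '' OrdSet s)

/-!
An optimal order of `s` starts with some `e ∈ s`; the first element contributes
`d_e(s)` and the remaining list is an order of `s \ {e}`, so `q(s) ≤ max_e (d_e(s) + q(s \ {e}))`.
Conversely, prepending `e` to an optimal order of `s \ {e}` gives an order of `s` with
consistency `d_e(s) + q(s \ {e})`.
-/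

section

variable {M : ℕ}

lemma ordSet_finite (s : Finset (Fin M)) : (OrdSet s).Finite :=
  (List.finite_length_le (Fin M) M).subset fun l hl => by
    simpa using hl.1.length_le_card

lemma ordSet_nonempty (s : Finset (Fin M)) : (OrdSet s).Nonempty :=
  ⟨s.toList, s.nodup_toList, s.toList_toFinset⟩

lemma le_maxConsistency (w : Fin M → Fin M → ℕ) {s : Finset (Fin M)} {l : List (Fin M)}
    (hl : l ∈ OrdSet s) : listConsistency w l ≤ maxConsistency w s :=
  le_csSup ((ordSet_finite s).image _).bddAbove ⟨l, hl, rfl⟩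

lemma exists_mem_ordSet_listConsistency_eq (w : Fin M → Fin M → ℕ) (s : Finset (Fin M)) :
    ∃ l ∈ OrdSet s, listConsistency w l = maxConsistency w s :=
  Nat.sSup_mem ((ordSet_nonempty s).image _) ((ordSet_finite s).image _).bddAbove

lemma cons_mem_ordSet_iff {s : Finset (Fin M)} {e : Fin M} {t : List (Fin M)} :
    e :: t ∈ OrdSet s ↔ e ∈ s ∧ t ∈ OrdSet (s.erase e) := by
  simp only [OrdSet, Set.mem_ofPred_eq, List.nodup_cons, List.toFinset_cons]
  constructor
  · rintro ⟨⟨het, hnt⟩, rfl⟩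
    refine ⟨Finset.mem_insert_self _ _, hnt, ?_⟩
    rw [Finset.erase_insert (by simpa using het)]
  · rintro ⟨hes, hnt, hts⟩
    have het : e ∉ t := fun h => by simpa [hts] using List.mem_toFinset.mpr h
    exact ⟨⟨het, hnt⟩, by rw [hts, Finset.insert_erase hes]⟩

lemma listConsistency_cons (w : Fin M → Fin M → ℕ) (e : Fin M) (t : List (Fin M)) :
    listConsistency w (e :: t) = (t.map (w e)).sum + listConsistency w t := by
  unfold listConsistency
  simp only [List.length_cons]
  rw [Fin.sum_univ_succ]
  congr 1
  · simp [Fin.sum_univ_succ]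
  · refine Finset.sum_congr rfl fun i _ => ?_
    simp [Fin.sum_univ_succ]

lemma listConsistency_cons_of_mem_ordSet (w : Fin M → Fin M → ℕ) (e : Fin M)
    {u : Finset (Fin M)} {t : List (Fin M)} (ht : t ∈ OrdSet u) :
    listConsistency w (e :: t) = ∑ n ∈ u, w e n + listConsistency w t := by
  rw [listConsistency_cons, ← ht.2, List.sum_toFinset _ ht.1]

end

theorem maxConsistency_recursion_general
    (M : ℕ) (w : Fin M → Fin M → ℕ)
    (s : Finset (Fin M)) (hs : s.Nonempty) :
    maxConsistency w s =
      s.sup' hs (fun e => (∑ n ∈ s.erase e, w e n) + maxConsistency w (s.erase e)) := by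
  apply le_antisymm
  · obtain ⟨l, hl, hC⟩ := exists_mem_ordSet_listConsistency_eq w s
    rw [← hC]
    cases l with
    | nil => exact absurd (hl.2.symm.trans List.toFinset_nil) hs.ne_empty
    | cons e t =>
      obtain ⟨hes, ht⟩ := cons_mem_ordSet_iff.mp hl
      rw [listConsistency_cons_of_mem_ordSet w e ht]
      refine le_trans ?_ (Finset.le_sup' _ hes)
      exact Nat.add_le_add_left (le_maxConsistency w ht) _
  · refine Finset.sup'_le hs _ fun e he => ?_
    obtain ⟨t, ht, hC⟩ := exists_mem_ordSet_listConsistency_eq w (s.erase e)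
    have hmem : e :: t ∈ OrdSet s := cons_mem_ordSet_iff.mpr ⟨he, ht⟩
    rw [← hC, ← listConsistency_cons_of_mem_ordSet w e ht]
    exact le_maxConsistency w hmem

/-- Recursion for the maximal consistency index (the degree of the spectrum polynomial):
for a nonempty finset `s`, `q(s) = max_{e ∈ s} (d_e(s) + q(s \ {e}))`, where
`d_e(s) = ∑_{n ∈ s \ {e}} w e n`. -/
theorem maxConsistency_recursion
    (M : ℕ) (w : Fin M → Fin M → ℕ) (hw : ∀ m, w m m = 0)
    (s : Finset (Fin M)) (hs : s.Nonempty) :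
    maxConsistency w s =
      s.sup' hs (fun e => (∑ n ∈ s.erase e, w e n) + maxConsistency w (s.erase e)) :=
  maxConsistency_recursion_general M w s hs
end
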